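/- For every natural number k, there is a bijection between the set of leaves of the action graph A_k (i.e., the vertices of A_k labeled k) and the set of planar rooted trees with k edges. -/

import Mathlib

/-- Vertices of action graphs: the root (labeled 0), or a vertex created at some
step, recorded together with its label and the path (head and tail of the vertex
sequence) that created it. -/
inductive AGVert : Type
  | root : AGVert
  | node (lbl : ℕ) (head : AGVert) (tail : List AGVert) : AGVert

/-- The label of a vertex. -/
def AGVert.label : AGVert → ℕ
  | .root => 0
  | .node l _ _ => l

/-- `IsPath E a l` says that `a :: l` is the vertex sequence of a directed path in a
graph with edge set `E` (the trivial path at `a` when `l = []`). -/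
def IsPath (E : Set (AGVert × AGVert)) (a : AGVert) (l : List AGVert) : Prop :=
  List.Chain (fun x y => (x, y) ∈ E) a l

/-- The terminal vertex of the path with vertex sequence `a :: l`. -/
def pathLast (a : AGVert) (l : List AGVert) : AGVert :=
  (a :: l).getLast (List.cons_ne_nil a l)

/-- The action graph `A k`, given by its set of vertices together with its set of
(nontrivial, directed) edges.  `A 0` has one vertex (labeled 0) and no nontrivial
edges; `A (k+1)` is obtained from `A k` by adjoining, for each directed path
(including trivial ones) in `A k` whose terminal vertex is labeled `k`, a new vertex
labeled `k+1` and a new edge from the initial vertex of the path to the new vertex. -/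
def actionGraph : ℕ → Set AGVert × Set (AGVert × AGVert)
  | 0 => ({AGVert.root}, ∅)
  | k + 1 =>
    let G := actionGraph k
    (G.1 ∪ { w | ∃ a l, a ∈ G.1 ∧ IsPath G.2 a l ∧ (pathLast a l).label = k ∧
        w = AGVert.node (k + 1) a l },
     G.2 ∪ { e | ∃ a l, a ∈ G.1 ∧ IsPath G.2 a l ∧ (pathLast a l).label = k ∧
        e = (a, AGVert.node (k + 1) a l) })

/-- A planar rooted tree: each vertex carries a linearly ordered (left-to-right) list of
children, and two planar rooted trees are equal exactly when there is a root-preserving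
isomorphism respecting the orderings of children. -/
inductive PlanarRootedTree : Type
  | node : List PlanarRootedTree → PlanarRootedTree

/-- The number of edges of a planar rooted tree. -/
def PlanarRootedTree.numEdges : PlanarRootedTree → ℕ
  | .node cs => cs.length + (cs.attach.map fun c => PlanarRootedTree.numEdges c.1).sum
decreasing_by
  cases c with
  | mk c hc =>
    exact Nat.lt_of_lt_of_le (List.sizeOf_lt_of_mem hc) (by simp [Nat.le_add_left])

/-!
A vertex `node j a l` of an action graph remembers the path `a :: l` that created it, and its
only incoming edge comes from `a`. So every `A k` is a tree rooted at `root`, and the paths of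
`A k` ending at a vertex `v` are exactly the final segments of the path from the root to `v`, one
for each ancestor of `v`. Hence a leaf of `A (k+1)` amounts to a leaf `v` of `A k` together with a
depth `i ≤ depth v`, and the new leaf has depth `i + 1`.

Planar rooted trees grow by the same rule: a tree with `k + 1` edges is a tree with `k` edges
plus a new first child of the vertex at some depth `i` on its leftmost branch, and then its
leftmost branch has length `i + 1`. Two families generated by the same rule from one object are in
bijection, by induction on `k`, through bijections matching the two statistics.
-/

section GrowthRule

variable {α β : ℕ → Type*} (f : ∀ k, α k → ℕ) (g : ∀ k, β k → ℕ)

theorem exists_equiv_of_succ_equiv (e₀ : α 0 ≃ β 0) (h₀ : ∀ x, g 0 (e₀ x) = f 0 x)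
    (eα : ∀ k, α (k + 1) ≃ {p : α k × ℕ // p.2 ≤ f k p.1})
    (hα : ∀ k x, f (k + 1) x = (eα k x).1.2 + 1)
    (eβ : ∀ k, β (k + 1) ≃ {p : β k × ℕ // p.2 ≤ g k p.1})
    (hβ : ∀ k y, g (k + 1) y = (eβ k y).1.2 + 1) :
    ∀ k, ∃ e : α k ≃ β k, ∀ x, g k (e x) = f k x
  | 0 => ⟨e₀, h₀⟩
  | k + 1 => by
    obtain ⟨e, he⟩ := exists_equiv_of_succ_equiv e₀ h₀ eα hα eβ hβ k
    let e' : {p : α k × ℕ // p.2 ≤ f k p.1} ≃ {p : β k × ℕ // p.2 ≤ g k p.1} :=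
      (e.prodCongr (Equiv.refl ℕ)).subtypeEquiv fun p => by simp [he]
    refine ⟨(eα k).trans (e'.trans (eβ k).symm), fun x => ?_⟩
    simp [e', hα, hβ]

end GrowthRule

namespace PlanarRootedTree

theorem numEdges_node_nil : (node []).numEdges = 0 := by
  simp [numEdges]

theorem numEdges_node_cons (c : PlanarRootedTree) (cs : List PlanarRootedTree) :
    (node (c :: cs)).numEdges = c.numEdges + (node cs).numEdges + 1 := by
  simp only [numEdges, List.attach_map_val, List.length_cons, List.map_cons, List.sum_cons]
  omega

theorem numEdges_eq_zero_iff {t : PlanarRootedTree} : t.numEdges = 0 ↔ t = node [] := by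
  refine ⟨fun h => ?_, fun h => h ▸ numEdges_node_nil⟩
  obtain ⟨_ | ⟨c, cs⟩⟩ := t
  · rfl
  · simp [numEdges_node_cons] at h

theorem ne_node_nil_of_numEdges_eq_succ {t : PlanarRootedTree} {k : ℕ}
    (ht : t.numEdges = k + 1) : t ≠ node [] :=
  fun h => by simp [h, numEdges_node_nil] at ht

def leftDepth : PlanarRootedTree → ℕ
  | node [] => 0
  | node (c :: _) => c.leftDepth + 1

/-- `graft i t` gives the vertex at depth `i` on the leftmost branch of `t` a new first child,
which is a leaf (junk if `t.leftDepth < i`). -/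
def graft : ℕ → PlanarRootedTree → PlanarRootedTree
  | 0, node cs => node (node [] :: cs)
  | _ + 1, node [] => node []
  | i + 1, node (c :: cs) => node (graft i c :: cs)

def prune : PlanarRootedTree → ℕ × PlanarRootedTree
  | node [] => (0, node [])
  | node (node [] :: cs) => (0, node cs)
  | node (node (d :: ds) :: cs) =>
    ((prune (node (d :: ds))).1 + 1, node ((prune (node (d :: ds))).2 :: cs))

theorem prune_node_cons {c : PlanarRootedTree} (hc : c ≠ node []) (cs : List PlanarRootedTree) :
    prune (node (c :: cs)) = ((prune c).1 + 1, node ((prune c).2 :: cs)) := by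
  obtain ⟨_ | ⟨d, ds⟩⟩ := c
  · exact absurd rfl hc
  · rfl

theorem leftDepth_graft {i : ℕ} {t : PlanarRootedTree} (hi : i ≤ t.leftDepth) :
    (graft i t).leftDepth = i + 1 := by
  fun_induction graft i t <;> simp_all [leftDepth]

theorem graft_ne_node_nil {i : ℕ} {t : PlanarRootedTree} (hi : i ≤ t.leftDepth) :
    graft i t ≠ node [] := by
  intro h
  simpa [h, leftDepth] using leftDepth_graft hi

theorem numEdges_graft {i : ℕ} {t : PlanarRootedTree} (hi : i ≤ t.leftDepth) :
    (graft i t).numEdges = t.numEdges + 1 := by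
  fun_induction graft i t <;> simp_all [leftDepth, numEdges_node_cons, numEdges_node_nil]
  omega

theorem prune_graft {i : ℕ} {t : PlanarRootedTree} (hi : i ≤ t.leftDepth) :
    prune (graft i t) = (i, t) := by
  fun_induction graft i t with
  | case1 cs => simp [prune]
  | case2 => simp [leftDepth] at hi
  | case3 i c cs ih =>
    replace hi : i ≤ c.leftDepth := by simpa [leftDepth] using hi
    rw [prune_node_cons (graft_ne_node_nil hi), ih hi]

theorem graft_prune {t : PlanarRootedTree} (ht : t ≠ node []) :
    (prune t).1 ≤ (prune t).2.leftDepth ∧ graft (prune t).1 (prune t).2 = t := by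
  fun_induction prune t with
  | case1 => exact absurd rfl ht
  | case2 cs => simp [graft]
  | case3 d ds cs ih =>
    obtain ⟨hle, hg⟩ := ih (by simp)
    simp [leftDepth, graft, hle, hg]

theorem numEdges_prune {t : PlanarRootedTree} (ht : t ≠ node []) :
    (prune t).2.numEdges + 1 = t.numEdges := by
  obtain ⟨hle, hgraft⟩ := graft_prune ht
  conv_rhs => rw [← hgraft]
  exact (numEdges_graft hle).symm

theorem leftDepth_prune {t : PlanarRootedTree} (ht : t ≠ node []) :
    t.leftDepth = (prune t).1 + 1 := by
  obtain ⟨hle, hgraft⟩ := graft_prune ht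
  conv_lhs => rw [← hgraft]
  exact leftDepth_graft hle

def pruneEquiv (k : ℕ) : {t : PlanarRootedTree // t.numEdges = k + 1} ≃
    {p : {t : PlanarRootedTree // t.numEdges = k} × ℕ // p.2 ≤ p.1.1.leftDepth} where
  toFun t :=
    have ht := ne_node_nil_of_numEdges_eq_succ t.2
    ⟨(⟨(prune t.1).2, by have := numEdges_prune ht; omega⟩, (prune t.1).1),
      (graft_prune ht).1⟩
  invFun p := ⟨graft p.1.2 p.1.1.1, by rw [numEdges_graft p.2, p.1.1.2]⟩
  left_inv t := Subtype.ext (graft_prune (ne_node_nil_of_numEdges_eq_succ t.2)).2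
  right_inv p := by ext <;> simp [prune_graft p.2]

theorem leftDepth_eq_pruneEquiv_add_one {k : ℕ}
    (t : {t : PlanarRootedTree // t.numEdges = k + 1}) :
    t.1.leftDepth = (pruneEquiv k t).1.2 + 1 :=
  leftDepth_prune (ne_node_nil_of_numEdges_eq_succ t.2)

end PlanarRootedTree

namespace AGVert

def parent : AGVert → AGVert
  | root => root
  | node _ a _ => a

def pathTail : AGVert → List AGVert
  | root => []
  | node _ _ l => l

def depth : AGVert → ℕ
  | root => 0
  | node _ a _ => a.depth + 1

def rootPath : AGVert → List AGVert
  | root => [root]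
  | node j a l => a.rootPath ++ [node j a l]

theorem exists_rootPath_eq_append (v : AGVert) : ∃ c, v.rootPath = c ++ [v] := by
  cases v with
  | root => exact ⟨[], rfl⟩
  | node j a l => exact ⟨a.rootPath, rfl⟩

theorem rootPath_ne_nil (v : AGVert) : v.rootPath ≠ [] := by
  obtain ⟨c, hc⟩ := v.exists_rootPath_eq_append
  simp [hc]

theorem getLast_rootPath (v : AGVert) : v.rootPath.getLast v.rootPath_ne_nil = v := by
  obtain ⟨c, hc⟩ := v.exists_rootPath_eq_append
  simp [hc]

theorem length_rootPath : ∀ v : AGVert, v.rootPath.length = v.depth + 1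
  | root => rfl
  | node _ a _ => by simp [rootPath, depth, length_rootPath a]

theorem getElem_rootPath_depth (v : AGVert) :
    v.rootPath[v.depth]'(by rw [length_rootPath]; exact v.depth.lt_succ_self) = v := by
  simpa [List.getLast_eq_getElem, length_rootPath] using v.getLast_rootPath

theorem depth_getElem_rootPath :
    ∀ (v : AGVert) (i : ℕ) (hi : i < v.rootPath.length), v.rootPath[i].depth = i
  | root, 0, _ => rfl
  | node j a l, i, hi => by
    simp only [rootPath, List.length_append, List.length_singleton] at hi
    rcases Nat.lt_succ_iff_lt_or_eq.1 hi with hi | rfl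
    · simp [rootPath, List.getElem_append_left hi, depth_getElem_rootPath a i hi]
    · simp [rootPath, depth, length_rootPath]

end AGVert

theorem pathLast_cons (a x : AGVert) (l : List AGVert) : pathLast a (x :: l) = pathLast x l :=
  rfl

theorem pathLast_eq_of_suffix {a : AGVert} {l c : List AGVert} (h : a :: l <:+ c)
    (hc : c ≠ []) : pathLast a l = c.getLast hc := by
  obtain ⟨t, rfl⟩ := h
  exact (List.getLast_append_of_ne_nil _ _).symm

namespace ActionGraph

open AGVert

theorem label_le_of_mem {k : ℕ} {v : AGVert} (hv : v ∈ (actionGraph k).1) : v.label ≤ k := by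
  induction k with
  | zero => simp_all [actionGraph, label]
  | succ k ih =>
    rcases hv with hv | ⟨a, l, -, -, -, rfl⟩
    · exact (ih hv).trans k.le_succ
    · exact le_rfl

theorem mem_of_mem_edges {k : ℕ} {x y : AGVert} (h : (x, y) ∈ (actionGraph k).2) :
    y ∈ (actionGraph k).1 ∧ ∃ j l, y = node j x l := by
  induction k with
  | zero => simp [actionGraph] at h
  | succ k ih =>
    rcases h with h | ⟨a, l, ha, hl, hlast, he⟩
    · exact ⟨Or.inl (ih h).1, (ih h).2⟩
    · obtain ⟨rfl, rfl⟩ := Prod.mk.inj he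
      exact ⟨Or.inr ⟨x, l, ha, hl, hlast, rfl⟩, _, _, rfl⟩

theorem mem_edges_of_node_mem {k j : ℕ} {a : AGVert} {l : List AGVert}
    (h : node j a l ∈ (actionGraph k).1) :
    a ∈ (actionGraph k).1 ∧ (a, node j a l) ∈ (actionGraph k).2 := by
  induction k with
  | zero => simp [actionGraph] at h
  | succ k ih =>
    rcases h with h | ⟨a', l', ha, hl, hlast, he⟩
    · exact ⟨Or.inl (ih h).1, Or.inl (ih h).2⟩
    · obtain ⟨rfl, rfl, rfl⟩ := node.inj he
      exact ⟨Or.inl ha, Or.inr ⟨a, l, ha, hl, hlast, rfl⟩⟩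

theorem pathLast_mem {k : ℕ} {a : AGVert} {l : List AGVert}
    (ha : a ∈ (actionGraph k).1) (hl : IsPath (actionGraph k).2 a l) :
    pathLast a l ∈ (actionGraph k).1 := by
  induction l generalizing a with
  | nil => exact ha
  | cons x l ih =>
    obtain ⟨hax, hl⟩ := List.isChain_cons_cons.1 hl
    exact ih (mem_of_mem_edges hax).1 hl

theorem rootPath_subset {k : ℕ} :
    ∀ {v : AGVert}, v ∈ (actionGraph k).1 → ∀ x ∈ v.rootPath, x ∈ (actionGraph k).1
  | root, hv, x, hx => by simp_all [rootPath]
  | node j a l, hv, x, hx => by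
    simp only [rootPath, List.mem_append, List.mem_singleton] at hx
    rcases hx with hx | rfl
    · exact rootPath_subset (mem_edges_of_node_mem hv).1 x hx
    · exact hv

theorem isChain_rootPath {k : ℕ} :
    ∀ {v : AGVert}, v ∈ (actionGraph k).1 →
      v.rootPath.IsChain (fun x y => (x, y) ∈ (actionGraph k).2)
  | root, _ => List.isChain_singleton _
  | node j a l, hv => by
    obtain ⟨ha, hedge⟩ := mem_edges_of_node_mem hv
    obtain ⟨c, hc⟩ := a.exists_rootPath_eq_append
    simp only [rootPath, hc, List.append_assoc, List.singleton_append,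
      List.isChain_append_cons_cons]
    exact ⟨hc ▸ isChain_rootPath ha, hedge, List.isChain_singleton _⟩

theorem rootPath_pathLast {k : ℕ} {a : AGVert} {l : List AGVert}
    (hl : IsPath (actionGraph k).2 a l) : (pathLast a l).rootPath = a.rootPath ++ l := by
  induction l generalizing a with
  | nil => simp [pathLast]
  | cons x l ih =>
    obtain ⟨hax, hl⟩ := List.isChain_cons_cons.1 hl
    obtain ⟨j, l', rfl⟩ := (mem_of_mem_edges hax).2
    simp [pathLast_cons, ih hl, rootPath]

theorem depth_pathLast {k : ℕ} {a : AGVert} {l : List AGVert}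
    (hl : IsPath (actionGraph k).2 a l) : (pathLast a l).depth = a.depth + l.length := by
  have := congrArg List.length (rootPath_pathLast hl)
  simp only [List.length_append, length_rootPath] at this
  omega

theorem isPath_drop_rootPath {k : ℕ} {v : AGVert} (hv : v ∈ (actionGraph k).1) {i : ℕ}
    (hi : i < v.rootPath.length) :
    v.rootPath[i] ∈ (actionGraph k).1 ∧
      IsPath (actionGraph k).2 v.rootPath[i] (v.rootPath.drop (i + 1)) ∧
      pathLast v.rootPath[i] (v.rootPath.drop (i + 1)) = v := by
  have hsuffix : v.rootPath[i] :: v.rootPath.drop (i + 1) <:+ v.rootPath := by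
    rw [List.getElem_cons_drop]
    exact List.drop_suffix _ _
  exact ⟨rootPath_subset hv _ (hsuffix.subset List.mem_cons_self),
    (isChain_rootPath hv).suffix hsuffix,
    (pathLast_eq_of_suffix hsuffix v.rootPath_ne_nil).trans v.getLast_rootPath⟩

def leaves (k : ℕ) : Set AGVert := {v | v ∈ (actionGraph k).1 ∧ v.label = k}

def leafPaths (k : ℕ) : Set (AGVert × List AGVert) :=
  {p | p.1 ∈ (actionGraph k).1 ∧ IsPath (actionGraph k).2 p.1 p.2 ∧
    (pathLast p.1 p.2).label = k}

theorem mem_leaves_succ_iff {k : ℕ} {w : AGVert} :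
    w ∈ leaves (k + 1) ↔ ∃ p ∈ leafPaths k, w = node (k + 1) p.1 p.2 := by
  constructor
  · rintro ⟨hw | ⟨a, l, ha, hl, hlast, rfl⟩, hlabel⟩
    · have := label_le_of_mem hw
      omega
    · exact ⟨(a, l), ⟨ha, hl, hlast⟩, rfl⟩
  · rintro ⟨⟨a, l⟩, ⟨ha, hl, hlast⟩, rfl⟩
    exact ⟨Or.inr ⟨a, l, ha, hl, hlast, rfl⟩, rfl⟩

def leavesSuccEquiv (k : ℕ) : leaves (k + 1) ≃ leafPaths k where
  toFun w := ⟨(w.1.parent, w.1.pathTail), by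
    obtain ⟨p, hp, hw⟩ := mem_leaves_succ_iff.1 w.2
    rwa [hw]⟩
  invFun p := ⟨node (k + 1) p.1.1 p.1.2, mem_leaves_succ_iff.2 ⟨p.1, p.2, rfl⟩⟩
  left_inv w := by
    obtain ⟨p, -, hw⟩ := mem_leaves_succ_iff.1 w.2
    ext1
    simp only [hw]
    rfl
  right_inv _ := rfl

/-- A path ending at a leaf `v` is determined by the position of its initial vertex on
`v.rootPath`, which is that vertex's depth. -/
def leafPathsEquiv (k : ℕ) : leafPaths k ≃ {p : leaves k × ℕ // p.2 ≤ p.1.1.depth} where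
  toFun p := ⟨(⟨pathLast p.1.1 p.1.2, pathLast_mem p.2.1 p.2.2.1, p.2.2.2⟩, p.1.1.depth),
    (depth_pathLast p.2.2.1).symm ▸ Nat.le_add_right _ _⟩
  invFun q :=
    have hi : q.1.2 < q.1.1.1.rootPath.length := by
      rw [length_rootPath]; exact Nat.lt_succ_of_le q.2
    have h := isPath_drop_rootPath q.1.1.2.1 hi
    ⟨(q.1.1.1.rootPath[q.1.2], q.1.1.1.rootPath.drop (q.1.2 + 1)),
      h.1, h.2.1, h.2.2 ▸ q.1.1.2.2⟩
  left_inv := by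
    rintro ⟨⟨a, l⟩, -, hl, -⟩
    have hlen := a.length_rootPath
    ext1
    simp [rootPath_pathLast hl, List.getElem_append_left, hlen, List.drop_left',
      getElem_rootPath_depth]
  right_inv := by
    rintro ⟨⟨v, i⟩, hi⟩
    ext
    · exact (isPath_drop_rootPath v.2.1 _).2.2
    · exact depth_getElem_rootPath _ _ _

theorem depth_eq_leafPathsEquiv_add_one {k : ℕ} (w : leaves (k + 1)) :
    w.1.depth = (leafPathsEquiv k (leavesSuccEquiv k w)).1.2 + 1 := by
  obtain ⟨p, -, hw⟩ := mem_leaves_succ_iff.1 w.2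
  change w.1.depth = w.1.parent.depth + 1
  rw [hw]
  rfl

def leavesZeroEquiv : leaves 0 ≃ {t : PlanarRootedTree // t.numEdges = 0} where
  toFun _ := ⟨.node [], PlanarRootedTree.numEdges_node_nil⟩
  invFun _ := ⟨root, rfl, rfl⟩
  left_inv v := Subtype.ext v.2.1.symm
  right_inv t := Subtype.ext (PlanarRootedTree.numEdges_eq_zero_iff.1 t.2).symm

end ActionGraph

/-- There is a bijection between the set of leaves of the action graph `A k` (the
vertices of `A k` labeled `k`) and the set of planar rooted trees with `k` edges. -/
theorem stmt_2 (k : ℕ) :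
    Nonempty ({v : AGVert // v ∈ (actionGraph k).1 ∧ v.label = k} ≃
      {t : PlanarRootedTree // t.numEdges = k}) := by
  obtain ⟨e, -⟩ := exists_equiv_of_succ_equiv
    (fun k (v : ActionGraph.leaves k) => v.1.depth)
    (fun k (t : {t : PlanarRootedTree // t.numEdges = k}) => t.1.leftDepth)
    ActionGraph.leavesZeroEquiv (fun v => by rw [v.2.1]; rfl)
    (fun k => (ActionGraph.leavesSuccEquiv k).trans (ActionGraph.leafPathsEquiv k))
    (fun _ => ActionGraph.depth_eq_leafPathsEquiv_add_one)
    PlanarRootedTree.pruneEquiv (fun _ => PlanarRootedTree.leftDepth_eq_pruneEquiv_add_one) k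
  exact ⟨e⟩
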